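/- Let G be a finite simple graph and let D ⊆ V(G) be a dual dominating set of G, i.e., D is a dominating set of G and for every vertex v ∈ V(G) there exists w ∈ D with w ∉ N[v]. Then for every H ∈ IIM_1(G), D is a dual dominating set of H; consequently, for every i ≥ 0 and every H ∈ IIM_i(G), D is a dominating set of H, so dom(H) ≤ |D|. -/

import Mathlib

/-- Vertex type after `l` IIM steps starting from vertex type `V`:
at each step every existing vertex gets one new copy. -/
def IterV (V : Type) : ℕ → Type
  | 0 => V
  | l + 1 => IterV V l ⊕ IterV V l

instance iterVFintype {V : Type} [Fintype V] : ∀ l, Fintype (IterV V l)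
  | 0 => inferInstanceAs (Fintype V)
  | l + 1 =>
    letI := iterVFintype (V := V) l
    inferInstanceAs (Fintype (IterV V l ⊕ IterV V l))

instance iterVNonempty {V : Type} [Nonempty V] : ∀ l, Nonempty (IterV V l)
  | 0 => inferInstanceAs (Nonempty V)
  | l + 1 =>
    letI := iterVNonempty (V := V) l
    inferInstanceAs (Nonempty (IterV V l ⊕ IterV V l))

/-- One IIM step: each vertex `v` of `G` gets a new copy (`Sum.inr v`), which is a
clone of `v` (joined to the closed neighborhood of `v`) if `σ v = true`, and an
anticlone of `v` (joined to the complement of the closed neighborhood) if `σ v = false`.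
Old vertices (`Sum.inl`) keep the edges of `G`; new vertices form an independent set. -/
def iimStep {V : Type} (G : SimpleGraph V) (σ : V → Bool) : SimpleGraph (V ⊕ V) where
  Adj x y :=
    match x, y with
    | Sum.inl u, Sum.inl v => G.Adj u v
    | Sum.inl u, Sum.inr v =>
        if σ v = true then u = v ∨ G.Adj u v else ¬(u = v ∨ G.Adj u v)
    | Sum.inr u, Sum.inl v =>
        if σ u = true then v = u ∨ G.Adj v u else ¬(v = u ∨ G.Adj v u)
    | Sum.inr _, Sum.inr _ => False
  symm := ⟨by
    rintro (u | u) (v | v) h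
    · exact G.adj_symm h
    · exact h
    · exact h
    · exact h⟩
  loopless := ⟨by
    rintro (u | u) h
    · exact G.irrefl h
    · exact h⟩

/-- The IIM graph after `l` steps starting from `G`, where `σ i` records, for each
vertex existing after `i` steps, whether its copy created at step `i+1` is a clone
(`true`) or an anticlone (`false`).  `IIM_l(G)` is exactly the set of graphs of the
form `iimGraph G σ l` as `σ` varies. -/
def iimGraph {V : Type} (G : SimpleGraph V) (σ : ∀ i, IterV V i → Bool) :
    ∀ l, SimpleGraph (IterV V l)
  | 0 => G
  | l + 1 => iimStep (iimGraph G σ l) (σ l)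

/-- The level (creation step) of a vertex of an IIM graph. -/
def levelOf {V : Type} : ∀ l, IterV V l → ℕ
  | 0, _ => 0
  | l + 1, Sum.inl x => levelOf l x
  | l + 1, Sum.inr _ => l + 1

/-- The (level-0) vertex `x` of the initial graph, viewed as a vertex of the IIM graph
after `l` steps. -/
def liftV {V : Type} (x : V) : ∀ l, IterV V l
  | 0 => x
  | l + 1 => Sum.inl (liftV x l)

/-- `D` is a dominating set of `H`: every vertex lies in `D` or is adjacent to a
vertex of `D`. -/
def IsDominating {W : Type} (H : SimpleGraph W) (D : Set W) : Prop :=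
  ∀ v : W, v ∈ D ∨ ∃ u ∈ D, H.Adj u v

/-- The domination number of `H`: the least size of a dominating set. -/
noncomputable def domNum {W : Type} (H : SimpleGraph W) : ℕ :=
  sInf {n | ∃ D : Set W, IsDominating H D ∧ D.ncard = n}

/-- `D` is a dual dominating set of `H`: a dominating set such that moreover every
vertex `v` has some `w ∈ D` with `w ∉ N[v]` (i.e. `w ≠ v` and `w` not adjacent to `v`). -/
def IsDualDominating {W : Type} (H : SimpleGraph W) (D : Set W) : Prop :=
  IsDominating H D ∧ ∀ v : W, ∃ w ∈ D, w ≠ v ∧ ¬ H.Adj w v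

/-! Dual domination says that every closed neighbourhood `N[v]` both meets `D` and misses `D`.
Among the old vertices, a clone of `v` is adjacent exactly to `N[v]` and an anticlone exactly
to its complement, so in either case the new vertex has a neighbour in `D` and a non-neighbour
in `D`; old vertices keep their adjacencies. Hence dual domination survives every IIM step, and
by induction the copy of `D` dominates every graph of `IIM_i(G)`. -/

section Domination

variable {W : Type} {H : SimpleGraph W} {D : Set W}

theorem isDominating_iff : IsDominating H D ↔ ∀ v, ∃ w ∈ D, w = v ∨ H.Adj w v := by
  refine forall_congr' fun v => ⟨?_, ?_⟩
  · rintro (hv | ⟨w, hw, hwv⟩)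
    exacts [⟨v, hv, .inl rfl⟩, ⟨w, hw, .inr hwv⟩]
  · rintro ⟨w, hw, rfl | hwv⟩
    exacts [.inl hw, .inr ⟨w, hw, hwv⟩]

theorem isDualDominating_iff : IsDualDominating H D ↔
    ∀ v, (∃ w ∈ D, w = v ∨ H.Adj w v) ∧ ∃ w ∈ D, ¬(w = v ∨ H.Adj w v) := by
  simp only [IsDualDominating, isDominating_iff, not_or, forall_and]

theorem domNum_le_ncard (h : IsDominating H D) : domNum H ≤ D.ncard :=
  Nat.sInf_le ⟨D, h, rfl⟩

end Domination

section IIM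

variable {V : Type} {G : SimpleGraph V} {σ : V → Bool}

@[simp]
theorem iimStep_adj_inl_inl {u v : V} : (iimStep G σ).Adj (.inl u) (.inl v) ↔ G.Adj u v :=
  Iff.rfl

@[simp]
theorem iimStep_adj_inl_inr {u v : V} :
    (iimStep G σ).Adj (.inl u) (.inr v) ↔ ((u = v ∨ G.Adj u v) ↔ σ v = true) := by
  change (if σ v = true then _ else _) ↔ _
  cases σ v <;> simp

theorem IsDualDominating.iimStep {D : Set V} (hD : IsDualDominating G D) (σ : V → Bool) :
    IsDualDominating (iimStep G σ) (Sum.inl '' D) := by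
  rw [isDualDominating_iff] at hD ⊢
  rintro (v | v) <;> obtain ⟨⟨a, ha, hav⟩, b, hb, hbv⟩ := hD v <;>
    simp only [Set.exists_mem_image, Sum.inl.injEq, reduceCtorEq, false_or,
      iimStep_adj_inl_inl, iimStep_adj_inl_inr]
  · exact ⟨⟨a, ha, hav⟩, b, hb, hbv⟩
  · cases σ v
    · exact ⟨⟨b, hb, iff_of_false hbv Bool.false_ne_true⟩, a, ha,
        fun h => Bool.false_ne_true (h.mp hav)⟩
    · exact ⟨⟨a, ha, iff_of_true hav rfl⟩, b, hb, fun h => hbv (h.mpr rfl)⟩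

theorem liftV_injective (l : ℕ) : Function.Injective (fun x : V => liftV x l) := by
  induction l with
  | zero => exact fun _ _ h => h
  | succ l ih => exact fun _ _ h => ih (Sum.inl.inj h)

theorem image_liftV_succ (D : Set V) (l : ℕ) :
    (fun x => liftV x (l + 1)) '' D = Sum.inl '' ((fun x => liftV x l) '' D) := by
  rw [Set.image_image]
  rfl

theorem IsDualDominating.iimGraph {D : Set V} (hD : IsDualDominating G D)
    (σ : ∀ j, IterV V j → Bool) (l : ℕ) :
    IsDualDominating (iimGraph G σ l) ((fun x => liftV x l) '' D) := by
  induction l with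
  | zero => exact (Set.image_id D).symm ▸ hD
  | succ l ih => rw [image_liftV_succ]; exact ih.iimStep (σ l)

end IIM

theorem stmt8_general {V : Type} (G : SimpleGraph V) (D : Set V)
    (hD : IsDualDominating G D) :
    (∀ σ₀ : V → Bool, IsDualDominating (iimStep G σ₀) (Sum.inl '' D)) ∧
    (∀ (i : ℕ) (σ : ∀ j, IterV V j → Bool),
      IsDominating (iimGraph G σ i) ((fun x => liftV x i) '' D) ∧
        domNum (iimGraph G σ i) ≤ D.ncard) := by
  refine ⟨hD.iimStep, fun i σ => ?_⟩
  have hdom := (hD.iimGraph σ i).1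
  refine ⟨hdom, ?_⟩
  calc domNum (iimGraph G σ i) ≤ ((fun x => liftV x i) '' D).ncard := domNum_le_ncard hdom
    _ = D.ncard := Set.ncard_image_of_injective D (liftV_injective i)

/-- If `D` is a dual dominating set of `G`, then for every
`H ∈ IIM_1(G)` the set `D` is a dual dominating set of `H`; consequently, for every
`i ≥ 0` and every `H ∈ IIM_i(G)`, `D` is a dominating set of `H`, so `dom(H) ≤ |D|`. -/
theorem stmt8 {V : Type} [Fintype V] (G : SimpleGraph V) (D : Set V)
    (hD : IsDualDominating G D) :
    (∀ σ₀ : V → Bool, IsDualDominating (iimStep G σ₀) (Sum.inl '' D)) ∧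
    (∀ (i : ℕ) (σ : ∀ j, IterV V j → Bool),
      IsDominating (iimGraph G σ i) ((fun x => liftV x i) '' D) ∧
        domNum (iimGraph G σ i) ≤ D.ncard) :=
  stmt8_general G D hD
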